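/- The group generated by the quaternionic matrices diag(i,i) and antidiag(j,j) = [[0,j],[j,0]] has order 8, and for every t ∈ [−1,1] the vector v_t = (1, t + √(1−t²)·i)ᵀ ∈ ℍ² is a common eigenvector of the group: for each generator g, g·v_t = v_t·λ for some quaternion λ (depending on g and t). In particular, antidiag(j,j)·v_t = v_t·(tj − √(1−t²)·k). -/

import Mathlib

noncomputable section
open Quaternion Matrix

abbrev HQ := ℍ[ℝ]
def qi : HQ := ⟨0,1,0,0⟩
def qj : HQ := ⟨0,0,1,0⟩
def qk : HQ := ⟨0,0,0,1⟩

/-- Inner product on the right ℍ-module ℍ^d. -/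
def inprod {d : ℕ} (v w : Fin d → HQ) : HQ := ∑ m, star (v m) * w m


/-- The continuous family of vectors v_t = (1, t + √(1−t²) i). -/
def vt (t : ℝ) : Fin 2 → HQ :=
  ![1, ((t : ℝ) : HQ) + ((Real.sqrt (1 - t ^ 2) : ℝ) : HQ) * qi]

/-!
`A = diag(i,i)` and `B = antidiag(j,j)` are anticommuting square roots of `-1`, so right
multiplication by `A` or `B` permutes the eight signed words `±AᵐBⁿ` (`m, n ∈ {0,1}`), which
therefore make up the whole monoid they generate. The words are distinct: `(1,1)ᵀ` is a common
eigenvector with eigenvalues `i` and `j`, so `±AᵐBⁿ (1,1)ᵀ` has first entry `±iᵐjⁿ`, and these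
eight quaternions are distinct.

For `z = t + s i` with `t² + s² = 1`, `z` commutes with `i` and `z j z = (t² + s²) j = j`; hence
`(1, z)` is an eigenvector of `A` with eigenvalue `i` and of `B` with eigenvalue `j z = t j − s k`.
-/

section SignedWord

variable {M : Type*} [Monoid M] [HasDistribNeg M] {a b : M}

def signedWord (a b : M) (w : Fin 2 × Fin 2 × Fin 2) : M :=
  (-1) ^ (w.1 : ℕ) * a ^ (w.2.1 : ℕ) * b ^ (w.2.2 : ℕ)

lemma signedWord_mul_fst (ha : a * a = -1) (hab : b * a = -(a * b)) (w : Fin 2 × Fin 2 × Fin 2) :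
    signedWord a b w * a = signedWord a b (w.1 + w.2.1 + w.2.2, w.2.1 + 1, w.2.2) := by
  have haab : a * (a * b) = -b := by rw [← mul_assoc, ha, neg_one_mul]
  obtain ⟨s, i, j⟩ := w
  fin_cases s <;> fin_cases i <;> fin_cases j <;> simp [signedWord, mul_assoc, ha, hab, haab]

lemma signedWord_mul_snd (hb : b * b = -1) (w : Fin 2 × Fin 2 × Fin 2) :
    signedWord a b w * b = signedWord a b (w.1 + w.2.2, w.2.1, w.2.2 + 1) := by
  obtain ⟨s, i, j⟩ := w
  fin_cases s <;> fin_cases i <;> fin_cases j <;> simp [signedWord, mul_assoc, hb]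

lemma signedWord_mem_closure (ha : a * a = -1) (w : Fin 2 × Fin 2 × Fin 2) :
    signedWord a b w ∈ Submonoid.closure {a, b} := by
  have ha_mem : a ∈ Submonoid.closure {a, b} := Submonoid.subset_closure (by simp)
  have hb_mem : b ∈ Submonoid.closure {a, b} := Submonoid.subset_closure (by simp)
  have hneg_mem : (-1 : M) ∈ Submonoid.closure {a, b} := ha ▸ mul_mem ha_mem ha_mem
  exact mul_mem (mul_mem (pow_mem hneg_mem _) (pow_mem ha_mem _)) (pow_mem hb_mem _)

theorem coe_closure_pair_eq_range_signedWord (ha : a * a = -1) (hb : b * b = -1)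
    (hab : b * a = -(a * b)) :
    (Submonoid.closure {a, b} : Set M) = Set.range (signedWord a b) := by
  refine subset_antisymm (fun x hx => ?_) (Set.range_subset_iff.2 (signedWord_mem_closure ha))
  induction hx using Submonoid.closure_induction_right with
  | one => exact ⟨0, by simp [signedWord]⟩
  | mul_right x _ y hy ih =>
    obtain ⟨w, rfl⟩ := ih
    rcases hy with rfl | rfl
    · exact ⟨_, (signedWord_mul_fst ha hab w).symm⟩
    · exact ⟨_, (signedWord_mul_snd hb w).symm⟩

theorem card_closure_pair_eq_eight (ha : a * a = -1) (hb : b * b = -1) (hab : b * a = -(a * b))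
    (hinj : Function.Injective (signedWord a b)) : Nat.card (Submonoid.closure {a, b}) = 8 := by
  rw [← SetLike.coe_sort_coe, coe_closure_pair_eq_range_signedWord ha hb hab,
    Nat.card_range_of_injective hinj]
  simp

end SignedWord

section Semiring

variable {R : Type*} [Semiring R]

lemma diag_mulVec_one_cons {a z : R} (hz : Commute a z) :
    !![a, 0; 0, a] *ᵥ ![1, z] = fun m => ![1, z] m * a := by
  ext m; fin_cases m <;> simp [hz.eq]

lemma antidiag_mulVec_one_cons {p z : R} (hz : z * (p * z) = p) :
    !![0, p; p, 0] *ᵥ ![1, z] = fun m => ![1, z] m * (p * z) := by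
  ext m; fin_cases m <;> simp [hz]

end Semiring

section Ring

variable {R : Type*} [Ring R] {a b : R}

lemma diag_mul_self (ha : a * a = -1) : !![a, 0; 0, a] * !![a, 0; 0, a] = -1 := by
  ext i j; fin_cases i <;> fin_cases j <;> simp [ha]

lemma antidiag_mul_self (hb : b * b = -1) : !![0, b; b, 0] * !![0, b; b, 0] = -1 := by
  ext i j; fin_cases i <;> fin_cases j <;> simp [hb]

lemma antidiag_mul_diag (hab : b * a = -(a * b)) :
    !![0, b; b, 0] * !![a, 0; 0, a] = -(!![a, 0; 0, a] * !![0, b; b, 0]) := by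
  ext i j; fin_cases i <;> fin_cases j <;> simp [hab]

end Ring

lemma qi_mul_qi : qi * qi = -1 := by
  ext <;> simp [re_mul, imI_mul, imJ_mul, imK_mul] <;> simp [qi]

lemma qj_mul_qj : qj * qj = -1 := by
  ext <;> simp [re_mul, imI_mul, imJ_mul, imK_mul] <;> simp [qj]

lemma qi_mul_qj : qi * qj = qk := by
  ext <;> simp [re_mul, imI_mul, imJ_mul, imK_mul] <;> simp [qi, qj, qk]

lemma qj_mul_qi : qj * qi = -qk := by
  ext <;> simp [re_mul, imI_mul, imJ_mul, imK_mul] <;> simp [qi, qj, qk]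

lemma signedWord_qi_qj_injective : Function.Injective (signedWord qi qj) := by
  simp only [Function.Injective, Prod.forall, Fin.forall_fin_two, signedWord, Prod.mk.injEq, Fin.val_zero, Fin.val_one,
    pow_zero, pow_one, one_mul, mul_one, neg_mul, qi_mul_qj, Quaternion.ext_iff, re_neg, imI_neg,
    imJ_neg, imK_neg, re_one, imI_one, imJ_one, imK_one]
  norm_num [qi, qj, qk]

lemma signedWord_mulVec_one_one (w : Fin 2 × Fin 2 × Fin 2) :
    (signedWord !![qi, 0; 0, qi] !![0, qj; qj, 0] w *ᵥ ![1, 1]) 0 = signedWord qi qj w := by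
  obtain ⟨s, i, j⟩ := w
  fin_cases s <;> fin_cases i <;> fin_cases j <;> simp [signedWord]

lemma card_closure_diag_qi_antidiag_qj :
    Nat.card (Submonoid.closure
      {(!![qi, 0; 0, qi] : Matrix (Fin 2) (Fin 2) HQ), !![0, qj; qj, 0]}) = 8 :=
  card_closure_pair_eq_eight (diag_mul_self qi_mul_qi) (antidiag_mul_self qj_mul_qj)
    (antidiag_mul_diag (by rw [qi_mul_qj, qj_mul_qi]))
    fun x y h => signedWord_qi_qj_injective <| by
      rw [← signedWord_mulVec_one_one, h, signedWord_mulVec_one_one]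

lemma commute_qi_coe_add_coe_mul_qi (t s : ℝ) : Commute qi (t + s * qi) :=
  (coe_commute t qi).symm.add_right ((coe_commute s qi).symm.mul_right (Commute.refl qi))

lemma qj_mul_coe_add_coe_mul_qi (t s : ℝ) : qj * (t + s * qi) = t * qj - s * qk := by
  ext <;> simp [re_mul, imI_mul, imJ_mul, imK_mul] <;> simp [qi, qj, qk]

lemma coe_add_coe_mul_qi_mul_qj_mul_self (t s : ℝ) :
    (t + s * qi) * (qj * (t + s * qi)) = (t ^ 2 + s ^ 2) • qj := by
  ext <;> simp [re_mul, imI_mul, imJ_mul, imK_mul] <;> simp [qi, qj] <;> ring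

lemma diag_qi_mulVec_vt (t : ℝ) : !![qi, 0; 0, qi] *ᵥ vt t = fun m => vt t m * qi :=
  diag_mulVec_one_cons (commute_qi_coe_add_coe_mul_qi _ _)

lemma antidiag_qj_mulVec_vt {t : ℝ} (ht : t ∈ Set.Icc (-1 : ℝ) 1) :
    !![0, qj; qj, 0] *ᵥ vt t = fun m => vt t m * (t * qj - Real.sqrt (1 - t ^ 2) * qk) := by
  have hsq : Real.sqrt (1 - t ^ 2) ^ 2 = 1 - t ^ 2 := Real.sq_sqrt (by nlinarith [ht.1, ht.2])
  rw [← qj_mul_coe_add_coe_mul_qi]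
  exact antidiag_mulVec_one_cons (by rw [coe_add_coe_mul_qi_mul_qj_mul_self, hsq]; simp)

/-- The group ⟨diag(i,i), antidiag(j,j)⟩ has order 8 and, for every
t ∈ [−1,1], v_t is a common (right) eigenvector of both generators;
in particular antidiag(j,j)·v_t = v_t·(tj − √(1−t²)k). -/
theorem continuous_family_of_eigenvectors :
    Nat.card (Submonoid.closure
      {(!![qi, 0; 0, qi] : Matrix (Fin 2) (Fin 2) HQ), !![0, qj; qj, 0]}) = 8 ∧
    (∀ t : ℝ, t ∈ Set.Icc (-1 : ℝ) 1 →
      (∃ lam : HQ, (!![qi, 0; 0, qi] : Matrix (Fin 2) (Fin 2) HQ).mulVec (vt t) =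
        fun m => vt t m * lam) ∧
      (∃ lam : HQ, (!![0, qj; qj, 0] : Matrix (Fin 2) (Fin 2) HQ).mulVec (vt t) =
        fun m => vt t m * lam) ∧
      (!![0, qj; qj, 0] : Matrix (Fin 2) (Fin 2) HQ).mulVec (vt t) =
        fun m => vt t m *
          (((t : ℝ) : HQ) * qj - ((Real.sqrt (1 - t ^ 2) : ℝ) : HQ) * qk)) :=
  ⟨card_closure_diag_qi_antidiag_qj, fun t ht =>
    ⟨⟨qi, diag_qi_mulVec_vt t⟩, ⟨_, antidiag_qj_mulVec_vt ht⟩, antidiag_qj_mulVec_vt ht⟩⟩
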